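/- arXiv:1904.10442 — 3 statements merged into one kernel-verified Lean document; each statement's English description precedes it below -/
import Mathlib

section
/- Let Z_1, …, Z_n be i.i.d. real-valued random variables with moment generating function m(ζ) = E[e^{ζZ_1}] and cumulant generating function ψ = log m, let γ ∈ ℝ, γ̃ = γ/n, and let τ ∈ [0,1] satisfy m(τ) < ∞. Let U be uniformly distributed on [0,1], independent of (Z_ℓ). Let V_1, …, V_n be i.i.d. with the exponentially tilted law of Y = Z_1 − γ̃, i.e., dϑ_τ(y) = e^{τy} dF_Y(y) / E[e^{τY}], and set S = Σ_{ℓ=1}^n V_ℓ. Then P[ Σ_{ℓ=1}^n Z_ℓ ≥ γ + log U ] = e^{n ψ(τ) − τγ} ( E[e^{−τS} 1{S ≥ 0}] + E[e^{(1−τ)S} 1{S < 0}] ). -/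
/-!
Put `W = Σ Z_ℓ - γ`. Since `U` is uniform and independent of `W`,
`P[log U ≤ W] = E[min(1, e^W)]`. Exponential tilting commutes with convolution, so `S` has the law
of `W` tilted by `e^{τw}`, whose normalising constant is `E[e^{τW}] = e^{nψ(τ) - τγ}`. Undoing the
tilt, `e^{-τs} min(1, e^s)` is `e^{-τs}` for `s ≥ 0` and `e^{(1-τ)s}` for `s < 0`.
-/

open MeasureTheory ProbabilityTheory Real Set

namespace MeasureTheory.Measure

lemma map_withDensity_comp {α β : Type*} [MeasurableSpace α] [MeasurableSpace β]
    (μ : Measure α) {g : α → β} (hg : Measurable g) {f : β → ENNReal} (hf : Measurable f) :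
    (μ.withDensity (f ∘ g)).map g = (μ.map g).withDensity f := by
  ext s hs
  rw [map_apply hg hs, withDensity_apply _ (hg hs), withDensity_apply _ hs,
    setLIntegral_map hs hf hg, Function.comp_def]

lemma integral_exp_mul_conv (p q : Measure ℝ) [SFinite p] [SFinite q] (τ : ℝ) :
    ∫ x, exp (τ * x) ∂(p ∗ q) = (∫ x, exp (τ * x) ∂p) * ∫ x, exp (τ * x) ∂q := by
  rw [conv, integral_map (by fun_prop) (by fun_prop)]
  simp_rw [mul_add, exp_add]
  exact integral_prod_mul (L := ℝ) (fun x => exp (τ * x)) (fun x => exp (τ * x))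

/-- No integrability is needed: `integral_exp_mul_conv` holds for junk values too, and a junk
normalising constant `0` makes the tilted measure `0`. -/
lemma tilted_conv (p q : Measure ℝ) [SFinite p] [SFinite q] (τ : ℝ) :
    (p ∗ q).tilted (τ * ·) = p.tilted (τ * ·) ∗ q.tilted (τ * ·) := by
  rw [tilted, tilted, tilted, integral_exp_mul_conv, conv, conv,
    prod_withDensity (by fun_prop) (by fun_prop),
    ← map_withDensity_comp _ (by fun_prop) (by fun_prop)]
  congr 2 with z
  rw [Function.comp_apply, ← ENNReal.ofReal_mul (by positivity), div_mul_div_comm, ← exp_add,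
    mul_add]

lemma tilted_dirac {α : Type*} [MeasurableSpace α] [MeasurableSingletonClass α] (x : α)
    (f : α → ℝ) : (dirac x).tilted f = dirac x := by
  rw [tilted_congr (g := fun _ => f x) (ae_dirac_eq x ▸ Filter.eventually_pure.mpr rfl),
    tilted_const]

end MeasureTheory.Measure

lemma volume_restrict_Icc_setOf_log_le (t : ℝ) :
    volume.restrict (Icc (0 : ℝ) 1) {u | log u ≤ t} = ENNReal.ofReal (min 1 (exp t)) := by
  have hslice : {u : ℝ | log u ≤ t} ∩ Ioc 0 1 = Ioc 0 (min 1 (exp t)) := by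
    ext u
    simp only [mem_inter_iff, mem_ofPred_eq, mem_Ioc, le_min_iff]
    constructor
    · rintro ⟨hlog, hu0, hu1⟩
      exact ⟨hu0, hu1, (log_le_iff_le_exp hu0).mp hlog⟩
    · rintro ⟨hu0, hu1, hue⟩
      exact ⟨(log_le_iff_le_exp hu0).mpr hue, hu0, hu1⟩
  rw [Measure.restrict_congr_set Ioc_ae_eq_Icc.symm,
    Measure.restrict_apply (measurableSet_le measurable_log measurable_const), hslice,
    volume_Ioc, sub_zero]

lemma integral_min_one_exp (r : Measure ℝ) [IsFiniteMeasure r] :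
    ∫ s, min 1 (exp s) ∂r = r.real (Ici 0) + ∫ s in Iio 0, exp s ∂r := by
  have hint : Integrable (fun s : ℝ => min 1 (exp s)) r := by
    refine Integrable.mono' (integrable_const 1) (by fun_prop) (ae_of_all _ fun s => ?_)
    rw [norm_of_nonneg (le_min zero_le_one (exp_pos s).le)]
    exact min_le_left _ _
  rw [← integral_add_compl measurableSet_Ici hint, compl_Ici,
    setIntegral_congr_fun measurableSet_Ici fun s hs => min_eq_left (one_le_exp hs),
    setIntegral_congr_fun measurableSet_Iio fun s hs => min_eq_right (exp_le_one_iff.mpr hs.le)]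
  simp

lemma setIntegral_exp_mul_tilted (r : Measure ℝ) (τ a : ℝ) {s : Set ℝ} (hs : MeasurableSet s) :
    ∫ y in s, exp (a * y) ∂(r.tilted (τ * ·))
      = (∫ y in s, exp ((τ + a) * y) ∂r) / ∫ y, exp (τ * y) ∂r := by
  rw [setIntegral_tilted' _ _ hs, ← integral_div]
  simp_rw [smul_eq_mul, div_mul_eq_mul_div, ← exp_add, add_mul]

namespace ProbabilityTheory

variable {Ω Ω' : Type*} [MeasurableSpace Ω] [MeasurableSpace Ω'] {μ : Measure Ω} {ν : Measure Ω'}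

lemma map_sum_range_eq_tilted [IsProbabilityMeasure μ] [IsProbabilityMeasure ν]
    {X : ℕ → Ω → ℝ} {Y : ℕ → Ω' → ℝ} {τ : ℝ}
    (hX : ∀ ℓ, Measurable (X ℓ)) (hY : ∀ ℓ, Measurable (Y ℓ))
    (hXind : iIndepFun X μ) (hYind : iIndepFun Y ν)
    (hlaw : ∀ ℓ, ν.map (Y ℓ) = (μ.map (X ℓ)).tilted (τ * ·)) (k : ℕ) :
    ν.map (∑ ℓ ∈ Finset.range k, Y ℓ) = (μ.map (∑ ℓ ∈ Finset.range k, X ℓ)).tilted (τ * ·) := by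
  induction k with
  | zero =>
    change ν.map (fun _ => (0 : ℝ)) = (μ.map fun _ => (0 : ℝ)).tilted (τ * ·)
    simp [Measure.map_const, Measure.tilted_dirac]
  | succ k ih =>
    rw [Finset.sum_range_succ, Finset.sum_range_succ,
      (hYind.indepFun_sum_range_succ hY k).map_add_eq_map_conv_map (by fun_prop) (hY k),
      (hXind.indepFun_sum_range_succ hX k).map_add_eq_map_conv_map (by fun_prop) (hX k),
      ih, hlaw k, Measure.tilted_conv]

lemma map_sum_range_eq_tilted_map_sum_sub [IsProbabilityMeasure μ] [IsProbabilityMeasure ν]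
    {Z : ℕ → Ω → ℝ} {V : ℕ → Ω' → ℝ} (hZ : ∀ ℓ, Measurable (Z ℓ)) (hV : ∀ ℓ, Measurable (V ℓ))
    (hZind : iIndepFun Z μ) (hident : ∀ ℓ, IdentDistrib (Z ℓ) (Z 0) μ μ) (hVind : iIndepFun V ν)
    {n : ℕ} (hn : n ≠ 0) {γ τ : ℝ}
    (hlaw : ∀ ℓ, ν.map (V ℓ) = (μ.map fun ω => Z 0 ω - γ / n).tilted (τ * ·)) :
    ν.map (fun ω' => ∑ ℓ ∈ Finset.range n, V ℓ ω')
      = (μ.map fun ω => ∑ ℓ ∈ Finset.range n, Z ℓ ω - γ).tilted (τ * ·) := by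
  have hlawX : ∀ ℓ, ν.map (V ℓ) = (μ.map fun ω => Z ℓ ω - γ / n).tilted (τ * ·) := fun ℓ =>
    (hlaw ℓ).trans (congrArg (·.tilted (τ * ·))
      ((hident ℓ).comp (measurable_id.sub_const (γ / n))).map_eq.symm)
  have hsum : ∑ ℓ ∈ Finset.range n, (fun ω => Z ℓ ω - γ / n)
      = fun ω => ∑ ℓ ∈ Finset.range n, Z ℓ ω - γ := by
    ext ω
    rw [Finset.sum_apply, Finset.sum_sub_distrib, Finset.sum_const, Finset.card_range,
      nsmul_eq_mul, mul_div_cancel₀ _ (Nat.cast_ne_zero.mpr hn)]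
  rw [← hsum, ← map_sum_range_eq_tilted (X := fun ℓ ω => Z ℓ ω - γ / n)
    (fun ℓ => (hZ ℓ).sub_const _) hV (hZind.comp _ fun _ => measurable_id.sub_const _) hVind hlawX,
    Finset.sum_fn]

lemma iIndepFun.indepFun_finsetSum_optionElim [IsProbabilityMeasure μ] {ι : Type*}
    {X : Ω → ℝ} {Z : ι → Ω → ℝ} (h : iIndepFun (fun i : Option ι => i.elim X Z) μ)
    (hX : Measurable X) (hZ : ∀ i, Measurable (Z i)) (s : Finset ι) :
    IndepFun (∑ i ∈ s, Z i) X μ := by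
  have := h.indepFun_finsetSum_of_notMem (s := s.map .some) (i := none)
    (by rintro (_ | i); exacts [hX, hZ i]) (by simp)
  simpa [Finset.sum_map] using this

lemma measureReal_log_le_eq_integral_min_one_exp [IsFiniteMeasure μ] {W U : Ω → ℝ}
    (hW : Measurable W) (hU : Measurable U) (hWU : IndepFun W U μ)
    (hUlaw : μ.map U = volume.restrict (Icc 0 1)) :
    μ.real {ω | log (U ω) ≤ W ω} = ∫ s, min 1 (exp s) ∂(μ.map W) := by
  have hE : MeasurableSet {z : ℝ × ℝ | log z.2 ≤ z.1} :=
    measurableSet_le (measurable_log.comp measurable_snd) measurable_fst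
  have hset : {ω | log (U ω) ≤ W ω} = (fun ω => (W ω, U ω)) ⁻¹' {z | log z.2 ≤ z.1} := rfl
  rw [measureReal_def, hset, ← Measure.map_apply (hW.prodMk hU) hE,
    (indepFun_iff_map_prod_eq_prod_map_map hW.aemeasurable hU.aemeasurable).mp hWU,
    Measure.prod_apply hE, hUlaw, integral_eq_lintegral_of_nonneg_ae
      (ae_of_all _ fun s => le_min zero_le_one (exp_pos s).le) (by fun_prop)]
  simp_rw [preimage_ofPred_eq, volume_restrict_Icc_setOf_log_le]

lemma integral_exp_mul_map_sum_sub [IsProbabilityMeasure μ] {Z : ℕ → Ω → ℝ}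
    (hZ : ∀ ℓ, Measurable (Z ℓ)) (hind : iIndepFun Z μ)
    (hident : ∀ ℓ, IdentDistrib (Z ℓ) (Z 0) μ μ) {τ : ℝ}
    (hmgf : Integrable (fun ω => exp (τ * Z 0 ω)) μ) (n : ℕ) (γ : ℝ) :
    ∫ y, exp (τ * y) ∂(μ.map fun ω => ∑ ℓ ∈ Finset.range n, Z ℓ ω - γ)
      = exp (n * cgf (Z 0) μ τ - τ * γ) := by
  have hsum : mgf (fun ω => ∑ ℓ ∈ Finset.range n, Z ℓ ω) μ τ = mgf (Z 0) μ τ ^ n := by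
    rw [← Finset.sum_fn, hind.mgf_sum hZ,
      Finset.prod_congr rfl fun ℓ _ => mgf_congr_of_identDistrib _ _ (hident ℓ) τ,
      Finset.prod_const, Finset.card_range]
  calc ∫ y, exp (τ * y) ∂(μ.map fun ω => ∑ ℓ ∈ Finset.range n, Z ℓ ω - γ)
      = mgf (fun ω => ∑ ℓ ∈ Finset.range n, Z ℓ ω + -γ) μ τ := by
        rw [integral_map (by fun_prop) (by fun_prop)]
        simp_rw [mgf, sub_eq_add_neg]
    _ = exp (n * cgf (Z 0) μ τ - τ * γ) := by
        rw [mgf_add_const, hsum, ← exp_cgf hmgf, ← exp_nat_mul, ← exp_add]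
        ring_nf

lemma integral_min_one_exp_eq_mul_setIntegral {r : Measure ℝ} [IsFiniteMeasure r] {τ : ℝ}
    (hM : ∫ y, exp (τ * y) ∂r ≠ 0) {S : Ω → ℝ} (hS : Measurable S)
    (hlaw : μ.map S = r.tilted (τ * ·)) :
    ∫ s, min 1 (exp s) ∂r = (∫ y, exp (τ * y) ∂r) *
      ((∫ ω in {ω | 0 ≤ S ω}, exp (-τ * S ω) ∂μ)
        + ∫ ω in {ω | S ω < 0}, exp ((1 - τ) * S ω) ∂μ) := by
  have hI₁ : ∫ ω in {ω | 0 ≤ S ω}, exp (-τ * S ω) ∂μ = ∫ y in Ici 0, exp (-τ * y) ∂(μ.map S) :=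
    (setIntegral_map (f := fun y => exp (-τ * y)) measurableSet_Ici (by fun_prop)
      hS.aemeasurable).symm
  have hI₂ : ∫ ω in {ω | S ω < 0}, exp ((1 - τ) * S ω) ∂μ
      = ∫ y in Iio 0, exp ((1 - τ) * y) ∂(μ.map S) :=
    (setIntegral_map (f := fun y => exp ((1 - τ) * y)) measurableSet_Iio (by fun_prop)
      hS.aemeasurable).symm
  rw [hI₁, hI₂, hlaw, integral_min_one_exp, setIntegral_exp_mul_tilted _ _ _ measurableSet_Ici,
    setIntegral_exp_mul_tilted _ _ _ measurableSet_Iio]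
  field_simp
  simp

end ProbabilityTheory

theorem tilting_probability_identity_with_logU_general
    {Ω : Type*} [MeasurableSpace Ω] (μ : Measure Ω) [IsProbabilityMeasure μ]
    {Ω' : Type*} [MeasurableSpace Ω'] (ν : Measure Ω') [IsProbabilityMeasure ν]
    (n : ℕ) (hn : 1 ≤ n) (Z : ℕ → Ω → ℝ) (U : Ω → ℝ) (V : ℕ → Ω' → ℝ)
    (hmeasZ : ∀ ℓ, Measurable (Z ℓ)) (hmeasU : Measurable U)
    (hmeasV : ∀ ℓ, Measurable (V ℓ))
    (hU : μ.map U = (volume : Measure ℝ).restrict (Set.Icc 0 1))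
    (hindep : iIndepFun
      (fun i : Option ℕ => i.elim U Z) μ)
    (hidentZ : ∀ ℓ, IdentDistrib (Z ℓ) (Z 0) μ μ)
    (γ : ℝ) (τ : ℝ)
    (hmgf : Integrable (fun ω => Real.exp (τ * Z 0 ω)) μ)
    (hindepV : iIndepFun V ν)
    (hlawV : ∀ ℓ, ν.map (V ℓ) =
      (μ.map (fun ω => Z 0 ω - γ / n)).tilted (fun y => τ * y)) :
    (μ {ω | γ + Real.log (U ω) ≤ ∑ ℓ ∈ Finset.range n, Z ℓ ω}).toReal =
      Real.exp ((n : ℝ) * cgf (Z 0) μ τ - τ * γ) *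
        ((∫ ω' in {ω' | 0 ≤ ∑ ℓ ∈ Finset.range n, V ℓ ω'},
            Real.exp (-τ * ∑ ℓ ∈ Finset.range n, V ℓ ω') ∂ν) +
          ∫ ω' in {ω' | ∑ ℓ ∈ Finset.range n, V ℓ ω' < 0},
            Real.exp ((1 - τ) * ∑ ℓ ∈ Finset.range n, V ℓ ω') ∂ν) := by
  set W : Ω → ℝ := fun ω => ∑ ℓ ∈ Finset.range n, Z ℓ ω - γ
  have hZind : iIndepFun Z μ := hindep.precomp (g := some) (Option.some_injective ℕ)
  have hWU : IndepFun W U μ := by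
    simpa [Function.comp_def, Finset.sum_apply] using
      (hindep.indepFun_finsetSum_optionElim hmeasU hmeasZ (Finset.range n)).comp
        (measurable_id.sub_const γ) measurable_id
  have hM : ∫ y, exp (τ * y) ∂(μ.map W) = exp (n * cgf (Z 0) μ τ - τ * γ) :=
    integral_exp_mul_map_sum_sub hmeasZ hZind hidentZ hmgf n γ
  calc (μ {ω | γ + log (U ω) ≤ ∑ ℓ ∈ Finset.range n, Z ℓ ω}).toReal
      = μ.real {ω | log (U ω) ≤ W ω} := by simp_rw [W, le_sub_iff_add_le']; rfl
    _ = ∫ s, min 1 (exp s) ∂(μ.map W) :=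
      measureReal_log_le_eq_integral_min_one_exp (by fun_prop) hmeasU hWU hU
    _ = _ := by
      rw [integral_min_one_exp_eq_mul_setIntegral (hM ▸ (exp_pos _).ne') (by fun_prop)
        (map_sum_range_eq_tilted_map_sum_sub hmeasZ hmeasV hZind hidentZ hindepV
          (Nat.one_le_iff_ne_zero.mp hn) hlawV), hM]

/-- The change-of-measure identity for the RCUs-type tail probability with the extra
`log U` term (`U` uniform on `[0,1]`, independent of the `Z`'s):
`P[Σ Z_ℓ ≥ γ + log U] = e^{nψ(τ) - τγ} ( E[e^{-τS} 1{S ≥ 0}] + E[e^{(1-τ)S} 1{S < 0}] )`,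
where `S = Σ V_ℓ` and the `V_ℓ` are i.i.d. with the exponentially tilted law of
`Y = Z_1 - γ/n`.  The mutual independence of `U` and the `Z`'s is expressed by the
family indexed by `Option ℕ` (index `none ↦ U`, `some ℓ ↦ Z ℓ`). -/
theorem tilting_probability_identity_with_logU
    {Ω : Type*} [MeasurableSpace Ω] (μ : Measure Ω) [IsProbabilityMeasure μ]
    {Ω' : Type*} [MeasurableSpace Ω'] (ν : Measure Ω') [IsProbabilityMeasure ν]
    (n : ℕ) (hn : 1 ≤ n) (Z : ℕ → Ω → ℝ) (U : Ω → ℝ) (V : ℕ → Ω' → ℝ)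
    (hmeasZ : ∀ ℓ, Measurable (Z ℓ)) (hmeasU : Measurable U)
    (hmeasV : ∀ ℓ, Measurable (V ℓ))
    (hU : μ.map U = (volume : Measure ℝ).restrict (Set.Icc 0 1))
    (hindep : iIndepFun
      (fun i : Option ℕ => i.elim U Z) μ)
    (hidentZ : ∀ ℓ, IdentDistrib (Z ℓ) (Z 0) μ μ)
    (γ : ℝ) (τ : ℝ) (hτ : τ ∈ Set.Icc (0 : ℝ) 1)
    (hmgf : Integrable (fun ω => Real.exp (τ * Z 0 ω)) μ)
    (hindepV : iIndepFun V ν)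
    (hlawV : ∀ ℓ, ν.map (V ℓ) =
      (μ.map (fun ω => Z 0 ω - γ / n)).tilted (fun y => τ * y)) :
    (μ {ω | γ + Real.log (U ω) ≤ ∑ ℓ ∈ Finset.range n, Z ℓ ω}).toReal =
      Real.exp ((n : ℝ) * cgf (Z 0) μ τ - τ * γ) *
        ((∫ ω' in {ω' | 0 ≤ ∑ ℓ ∈ Finset.range n, V ℓ ω'},
            Real.exp (-τ * ∑ ℓ ∈ Finset.range n, V ℓ ω') ∂ν) +
          ∫ ω' in {ω' | ∑ ℓ ∈ Finset.range n, V ℓ ω' < 0},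
            Real.exp ((1 - τ) * ∑ ℓ ∈ Finset.range n, V ℓ ω') ∂ν) :=
  tilting_probability_identity_with_logU_general μ ν n hn Z U V hmeasZ hmeasU hmeasV hU hindep
    hidentZ γ τ hmgf hindepV hlawV
end

section
/- For every b > 0, ∫_1^∞ b (z² − 1) e^{−bz − z²/2} dz ≤ (b(b+2) + 2) e^{−b} / b². -/
open MeasureTheory Real Set Filter Topology

/-! Since `z² - 1 ≤ z²` and `e^{-z²/2} ≤ 1`, the integrand is dominated on `[1, ∞)` by
`b z² e^{-bz}`, whose integral over `[1, ∞)` is exactly `(b(b+2) + 2) e^{-b} / b²`: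
an antiderivative is `-(z² + 2z/b + 2/b²) e^{-bz}`. -/

section SqMulExpNegMul

variable {b : ℝ}

theorem hasDerivAt_sq_mul_exp_neg_mul_primitive (hb : b ≠ 0) (z : ℝ) :
    HasDerivAt (fun z => -(z ^ 2 + 2 * z / b + 2 / b ^ 2) * exp (-b * z))
      (b * z ^ 2 * exp (-b * z)) z := by
  have hpoly : HasDerivAt (fun z : ℝ => -(z ^ 2 + 2 * z / b + 2 / b ^ 2)) (-(2 * z + 2 / b)) z := by
    refine (((hasDerivAt_pow 2 z).add
      (((hasDerivAt_id z).const_mul 2).div_const b)).add_const _).neg.congr_deriv ?_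
    simp
  have hexp : HasDerivAt (fun z : ℝ => exp (-b * z)) (exp (-b * z) * -b) z := by
    simpa using ((hasDerivAt_id z).const_mul (-b)).exp
  refine (hpoly.mul hexp).congr_deriv ?_
  field_simp
  ring

theorem tendsto_sq_mul_exp_neg_mul_primitive_atTop (hb : 0 < b) :
    Tendsto (fun z => -(z ^ 2 + 2 * z / b + 2 / b ^ 2) * exp (-b * z)) atTop (𝓝 0) := by
  have hpow (n : ℕ) : Tendsto (fun z : ℝ => z ^ n * exp (-b * z)) atTop (𝓝 0) := by
    simpa only [rpow_natCast] using tendsto_rpow_mul_exp_neg_mul_atTop_nhds_zero n b hb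
  have hsum := (((hpow 2).add ((hpow 1).const_mul (2 / b))).add ((hpow 0).const_mul (2 / b ^ 2))).neg
  simp only [mul_zero, add_zero, neg_zero] at hsum
  refine hsum.congr fun z => ?_
  ring

theorem integral_Ioi_mul_sq_mul_exp_neg_mul (hb : 0 < b) (a : ℝ) :
    ∫ z in Ioi a, b * z ^ 2 * exp (-b * z) = (a ^ 2 + 2 * a / b + 2 / b ^ 2) * exp (-b * a) := by
  have h := integral_Ioi_of_hasDerivAt_of_nonneg
    (hasDerivAt_sq_mul_exp_neg_mul_primitive hb.ne' a).continuousAt.continuousWithinAt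
    (fun z _ => hasDerivAt_sq_mul_exp_neg_mul_primitive hb.ne' z) (fun z _ => by positivity)
    (tendsto_sq_mul_exp_neg_mul_primitive_atTop hb)
  rw [h]
  ring

theorem integrableOn_Ioi_mul_sq_mul_exp_neg_mul (hb : 0 < b) (a : ℝ) :
    IntegrableOn (fun z => b * z ^ 2 * exp (-b * z)) (Ioi a) :=
  integrableOn_Ioi_deriv_of_nonneg
    (hasDerivAt_sq_mul_exp_neg_mul_primitive hb.ne' a).continuousAt.continuousWithinAt
    (fun z _ => hasDerivAt_sq_mul_exp_neg_mul_primitive hb.ne' z) (fun z _ => by positivity)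
    (tendsto_sq_mul_exp_neg_mul_primitive_atTop hb)

end SqMulExpNegMul

theorem mul_sq_sub_one_mul_exp_le {b z : ℝ} (hb : 0 ≤ b) :
    b * (z ^ 2 - 1) * exp (-b * z - z ^ 2 / 2) ≤ b * z ^ 2 * exp (-b * z) := by
  have hexp : exp (-b * z - z ^ 2 / 2) ≤ exp (-b * z) := exp_le_exp.2 (by nlinarith [sq_nonneg z])
  calc b * (z ^ 2 - 1) * exp (-b * z - z ^ 2 / 2)
      ≤ b * z ^ 2 * exp (-b * z - z ^ 2 / 2) := by gcongr; linarith
    _ ≤ b * z ^ 2 * exp (-b * z) := by gcongr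

/-- The second integral in the proof of Corollary 1:
`∫_1^∞ b (z² - 1) e^{-bz - z²/2} dz ≤ (b(b+2) + 2) e^{-b} / b²` for every `b > 0`. -/
theorem integral_bound_on_tail (b : ℝ) (hb : 0 < b) :
    ∫ z in Set.Ici (1 : ℝ), b * (z ^ 2 - 1) * Real.exp (-b * z - z ^ 2 / 2) ≤
      (b * (b + 2) + 2) * Real.exp (-b) / b ^ 2 := by
  have hnonneg : ∀ᵐ z ∂volume.restrict (Ioi (1 : ℝ)),
      0 ≤ b * (z ^ 2 - 1) * exp (-b * z - z ^ 2 / 2) := by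
    filter_upwards [ae_restrict_mem measurableSet_Ioi] with z (hz : 1 < z)
    have : 0 ≤ z ^ 2 - 1 := by nlinarith
    positivity
  calc ∫ z in Ici (1 : ℝ), b * (z ^ 2 - 1) * exp (-b * z - z ^ 2 / 2)
      = ∫ z in Ioi (1 : ℝ), b * (z ^ 2 - 1) * exp (-b * z - z ^ 2 / 2) := integral_Ici_eq_integral_Ioi
    _ ≤ ∫ z in Ioi (1 : ℝ), b * z ^ 2 * exp (-b * z) :=
        integral_mono_of_nonneg hnonneg (integrableOn_Ioi_mul_sq_mul_exp_neg_mul hb 1)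
          (Eventually.of_forall fun _ => mul_sq_sub_one_mul_exp_le hb.le)
    _ = (b * (b + 2) + 2) * exp (-b) / b ^ 2 := by
        rw [integral_Ioi_mul_sq_mul_exp_neg_mul hb]
        field_simp
end

section
/- Let Θ be an index set and, for each θ ∈ Θ, let Z_θ be a real random variable, W_θ a nonnegative random variable on the same probability space, and τ_θ ∈ ℝ with |τ_θ| ≤ T for some fixed T > 0. Assume sup_{θ∈Θ} E[W_θ²] < ∞ and sup_{θ∈Θ} E[Z_θ²] < ∞. If inf_{θ∈Θ} E[e^{τ_θ Z_θ} W_θ] = 0, then inf_{θ∈Θ} E[W_θ] = 0. Equivalently, if inf_{θ∈Θ} E[W_θ] > 0 then inf_{θ∈Θ} E[e^{τ_θ Z_θ} W_θ] > 0. -/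
open MeasureTheory Real Set

lemma single_tilt_bound {Ω : Type*} [MeasurableSpace Ω] (μ : Measure Ω) [IsProbabilityMeasure μ]
    (Z W : Ω → ℝ) (τ T M ε : ℝ) (hM : 0 < M) (hT : 0 < T) (hτ : |τ| ≤ T)
    (hmZ : Measurable Z) (hW0 : ∀ᵐ ω ∂μ, 0 ≤ W ω)
    (hiW : Integrable W μ) (hiW2 : Integrable (fun ω => W ω ^ 2) μ)
    (hiZ2 : Integrable (fun ω => Z ω ^ 2) μ)
    (hiWE : Integrable (fun ω => Real.exp (τ * Z ω) * W ω) μ) (hε : 0 < ε) :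
    Real.exp (-(T*M)) * ((∫ ω, W ω ∂μ)
        - (ε * ∫ ω, W ω ^ 2 ∂μ + (∫ ω, Z ω ^ 2 ∂μ)/(4*ε*M^2)))
      ≤ ∫ ω, Real.exp (τ * Z ω) * W ω ∂μ := by
  set A : Set Ω := {ω | |Z ω| ≤ M} with hA
  have hAm : MeasurableSet A := measurableSet_le hmZ.abs measurable_const
  have hiInd : Integrable (A.indicator W) μ := hiW.indicator hAm
  have hiIndC : Integrable (Aᶜ.indicator W) μ := hiW.indicator hAm.compl
  have hiRHS : Integrable (fun ω => ε * W ω ^ 2 + Z ω ^ 2 / (4*ε*M^2)) μ :=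
    (hiW2.const_mul ε).add (hiZ2.div_const _)
  have hstep1 : ∫ ω, Aᶜ.indicator W ω ∂μ
      ≤ ε * ∫ ω, W ω ^ 2 ∂μ + (∫ ω, Z ω ^ 2 ∂μ)/(4*ε*M^2) := by
    have hpt : ∀ᵐ ω ∂μ, Aᶜ.indicator W ω ≤ ε * W ω ^ 2 + Z ω ^ 2 / (4*ε*M^2) := by
      filter_upwards [hW0] with ω hw
      by_cases hωA : ω ∈ Aᶜ
      · rw [Set.indicator_of_mem hωA]
        have hz : M < |Z ω| := not_le.mp hωA
        have hz2 : M^2 ≤ Z ω ^ 2 := by nlinarith [abs_nonneg (Z ω), sq_abs (Z ω)]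
        have h1 : W ω ≤ ε * W ω ^ 2 + 1/(4*ε) := by
          rw [← sub_nonneg]
          have key : ε * W ω ^ 2 + 1/(4*ε) - W ω = (2*ε*W ω - 1)^2 / (4*ε) := by
            field_simp; ring
          rw [key]; positivity
        have h2 : 1/(4*ε) ≤ Z ω ^ 2/(4*ε*M^2) := by
          rw [div_le_div_iff₀ (by positivity) (by positivity)]
          nlinarith [hz2]
        linarith
      · rw [Set.indicator_of_notMem hωA]; positivity
    calc ∫ ω, Aᶜ.indicator W ω ∂μ
        ≤ ∫ ω, (ε * W ω ^ 2 + Z ω ^ 2 / (4*ε*M^2)) ∂μ := integral_mono_ae hiIndC hiRHS hpt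
      _ = ε * ∫ ω, W ω ^ 2 ∂μ + (∫ ω, Z ω ^ 2 ∂μ)/(4*ε*M^2) := by
          rw [integral_add (hiW2.const_mul ε) (hiZ2.div_const _), integral_const_mul,
            integral_div]
  have hsplit : ∫ ω, A.indicator W ω ∂μ = (∫ ω, W ω ∂μ) - ∫ ω, Aᶜ.indicator W ω ∂μ := by
    have h := integral_add_compl hAm hiW
    rw [integral_indicator hAm, integral_indicator hAm.compl]
    linarith
  have hstep3 : Real.exp (-(T*M)) * ∫ ω, A.indicator W ω ∂μ
      ≤ ∫ ω, Real.exp (τ * Z ω) * W ω ∂μ := by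
    rw [← integral_const_mul]
    apply integral_mono_ae (hiInd.const_mul _) hiWE
    filter_upwards [hW0] with ω hw
    by_cases hωA : ω ∈ A
    · rw [Set.indicator_of_mem hωA]
      have hzM : |Z ω| ≤ M := hωA
      have hbd : -(T*M) ≤ τ * Z ω := by
        have h1 : |τ * Z ω| ≤ T * M := by
          rw [abs_mul]; exact mul_le_mul hτ hzM (abs_nonneg _) hT.le
        linarith [neg_abs_le (τ * Z ω)]
      exact mul_le_mul_of_nonneg_right (Real.exp_le_exp.mpr hbd) hw
    · rw [Set.indicator_of_notMem hωA, mul_zero]; positivity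
  calc Real.exp (-(T*M)) * ((∫ ω, W ω ∂μ)
        - (ε * ∫ ω, W ω ^ 2 ∂μ + (∫ ω, Z ω ^ 2 ∂μ)/(4*ε*M^2)))
      ≤ Real.exp (-(T*M)) * ∫ ω, A.indicator W ω ∂μ := by
        apply mul_le_mul_of_nonneg_left _ (Real.exp_nonneg _)
        rw [hsplit]; linarith
    _ ≤ _ := hstep3

/-- The truncation argument used repeatedly in the appendices:
for nonnegative `W_θ` with uniformly bounded second moments, `Z_θ` with uniformly bounded
second moments, and uniformly bounded tilting parameters `τ_θ`, if
`inf_θ E[e^{τ_θ Z_θ} W_θ] = 0` then `inf_θ E[W_θ] = 0`; equivalently, if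
`inf_θ E[W_θ] > 0` then `inf_θ E[e^{τ_θ Z_θ} W_θ] > 0`. -/
theorem tilted_expectation_inf_zero
    {Ω : Type*} [MeasurableSpace Ω] (μ : Measure Ω) [IsProbabilityMeasure μ]
    {Θ : Type*} (Z W : Θ → Ω → ℝ) (τ : Θ → ℝ) (T : ℝ) (hT : 0 < T)
    (hτ : ∀ θ, |τ θ| ≤ T)
    (hmeasZ : ∀ θ, Measurable (Z θ)) (hmeasW : ∀ θ, Measurable (W θ))
    (hWnonneg : ∀ θ, ∀ᵐ ω ∂μ, 0 ≤ W θ ω)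
    (hintW : ∀ θ, Integrable (W θ) μ)
    (hintW2 : ∀ θ, Integrable (fun ω => (W θ ω) ^ 2) μ)
    (hintZ2 : ∀ θ, Integrable (fun ω => (Z θ ω) ^ 2) μ)
    (hintWE : ∀ θ, Integrable (fun ω => Real.exp (τ θ * Z θ ω) * W θ ω) μ)
    (hW2bdd : ∃ C : ℝ, ∀ θ, ∫ ω, (W θ ω) ^ 2 ∂μ ≤ C)
    (hZ2bdd : ∃ C : ℝ, ∀ θ, ∫ ω, (Z θ ω) ^ 2 ∂μ ≤ C) :
    ((∀ c > (0 : ℝ), ∃ θ, ∫ ω, Real.exp (τ θ * Z θ ω) * W θ ω ∂μ < c) →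
      (∀ c > (0 : ℝ), ∃ θ, ∫ ω, W θ ω ∂μ < c)) ∧
    ((∃ c > (0 : ℝ), ∀ θ, c ≤ ∫ ω, W θ ω ∂μ) →
      (∃ c > (0 : ℝ), ∀ θ, c ≤ ∫ ω, Real.exp (τ θ * Z θ ω) * W θ ω ∂μ)) := by
  have h2 : (∃ c > (0 : ℝ), ∀ θ, c ≤ ∫ ω, W θ ω ∂μ) →
      (∃ c > (0 : ℝ), ∀ θ, c ≤ ∫ ω, Real.exp (τ θ * Z θ ω) * W θ ω ∂μ) := by
    rintro ⟨c, hc, hcW⟩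
    rcases isEmpty_or_nonempty Θ with hΘ | hΘ
    · exact ⟨1, one_pos, fun θ => (hΘ.false θ).elim⟩
    obtain ⟨CW, hCW⟩ := hW2bdd
    obtain ⟨CZ, hCZ⟩ := hZ2bdd
    have hCW0 : 0 ≤ CW :=
      le_trans (integral_nonneg fun ω => sq_nonneg _) (hCW (Classical.arbitrary Θ))
    have hCZ0 : 0 ≤ CZ :=
      le_trans (integral_nonneg fun ω => sq_nonneg _) (hCZ (Classical.arbitrary Θ))
    set ε : ℝ := c / (4 * (CW + 1)) with hεdef
    have hε : 0 < ε := by positivity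
    set M : ℝ := Real.sqrt (CZ / (ε * c)) + 1 with hMdef
    have hM : 0 < M := by positivity
    have hM2 : CZ / (ε * c) ≤ M ^ 2 := by
      have h := Real.sq_sqrt (show (0:ℝ) ≤ CZ / (ε * c) by positivity)
      nlinarith [Real.sqrt_nonneg (CZ / (ε * c))]
    refine ⟨Real.exp (-(T*M)) * (c/2), by positivity, fun θ => ?_⟩
    have key := single_tilt_bound μ (Z θ) (W θ) (τ θ) T M ε hM hT (hτ θ) (hmeasZ θ)
      (hWnonneg θ) (hintW θ) (hintW2 θ) (hintZ2 θ) (hintWE θ) hε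
    refine le_trans ?_ key
    apply mul_le_mul_of_nonneg_left _ (Real.exp_nonneg _)
    have h1 : ε * ∫ ω, W θ ω ^ 2 ∂μ ≤ c / 4 := by
      have hle : ε * ∫ ω, W θ ω ^ 2 ∂μ ≤ ε * CW := by
        apply mul_le_mul_of_nonneg_left (hCW θ) hε.le
      have : ε * CW ≤ c / 4 := by
        rw [hεdef, div_mul_eq_mul_div, div_le_div_iff₀ (by positivity) (by norm_num)]
        nlinarith
      linarith
    have h2' : (∫ ω, Z θ ω ^ 2 ∂μ) / (4*ε*M^2) ≤ c / 4 := by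
      have hle : (∫ ω, Z θ ω ^ 2 ∂μ) / (4*ε*M^2) ≤ CZ / (4*ε*M^2) := by
        apply div_le_div_of_nonneg_right (hCZ θ) ?_ |>.trans_eq rfl
        · positivity
      have hCZle : CZ ≤ ε * c * M ^ 2 := by
        rw [div_le_iff₀ (by positivity)] at hM2
        linarith
      have : CZ / (4*ε*M^2) ≤ c / 4 := by
        rw [div_le_div_iff₀ (by positivity) (by norm_num)]
        nlinarith
      linarith
    linarith [hcW θ]
  refine ⟨?_, h2⟩
  intro ht c hc
  by_contra hcon
  push_neg at hcon
  obtain ⟨c', hc', hall⟩ := h2 ⟨c, hc, hcon⟩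
  obtain ⟨θ, hθ⟩ := ht c' hc'
  linarith [hall θ]
end
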